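/- arXiv:1412.2714 — 2 statements merged into one kernel-verified Lean document; each statement's English description precedes it below -/
import Mathlib

section
/- The function W₀(ξ) = (e^ξ - 1)²/(e^{ξ/2}·√(e^{2ξ} - 1)), viewed as a function of (x,ξ) ∈ ℝ × (0,∞) independent of x, satisfies the differential equation W_{ξξ} + W_{xx} - P(ξ)W = 0 with P(ξ) = (e^{4ξ} + 10e^{2ξ} + 1)/(4(e^{2ξ}-1)²), extends continuously to ξ = 0 with value 0, and is positive for ξ > 0. -/
/-!
With `t = exp ξ`, on `ξ > 0` one has `W₀ = (t - 1)^{3/2} t^{-1/2} (t + 1)^{-1/2} = exp L` for an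
explicit `L`, so `W₀' = ℓ W₀` with `ℓ = L'` and `W₀'' = (ℓ' + ℓ²) W₀`. The rational function `ℓ` of
`t` satisfies the Riccati equation `ℓ' + ℓ² = P`. In the same variables `W₀ = √(t - 1)³ / (√t √(t + 1))`,
which is continuous at `ξ = 0` with value `0`.
-/

noncomputable def P (ξ : ℝ) : ℝ :=
  (Real.exp (4 * ξ) + 10 * Real.exp (2 * ξ) + 1) / (4 * (Real.exp (2 * ξ) - 1) ^ 2)

noncomputable def W₀ (ξ : ℝ) : ℝ :=
  (Real.exp ξ - 1) ^ 2 / (Real.exp (ξ / 2) * Real.sqrt (Real.exp (2 * ξ) - 1))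

open Real Filter Topology Set

theorem deriv_deriv_eq_of_hasDerivAt_mul_self {f ℓ : ℝ → ℝ} {s : Set ℝ} {x m : ℝ}
    (hs : IsOpen s) (hx : x ∈ s) (hf : ∀ y ∈ s, HasDerivAt f (ℓ y * f y) y)
    (hℓ : HasDerivAt ℓ m x) :
    deriv (deriv f) x = (m + ℓ x ^ 2) * f x := by
  have hderiv : deriv f =ᶠ[𝓝 x] fun y => ℓ y * f y :=
    eventually_of_mem (hs.mem_nhds hx) fun y hy => (hf y hy).deriv
  rw [hderiv.deriv_eq]
  exact (hℓ.mul (hf x hx)).deriv.trans (by ring)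

noncomputable def logW₀ (ξ : ℝ) : ℝ :=
  3 / 2 * log (exp ξ - 1) - ξ / 2 - 1 / 2 * log (exp ξ + 1)

noncomputable def logDerivW₀ (ξ : ℝ) : ℝ :=
  3 / 2 * (exp ξ / (exp ξ - 1)) - 1 / 2 - 1 / 2 * (exp ξ / (exp ξ + 1))

section

variable {ξ : ℝ}

lemma exp_sub_one_pos_of_pos (hξ : 0 < ξ) : 0 < exp ξ - 1 := by
  linarith [one_lt_exp_iff.mpr hξ]

lemma exp_two_mul_sub_one : exp (2 * ξ) - 1 = (exp ξ - 1) * (exp ξ + 1) := by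
  rw [two_mul, exp_add]
  ring

lemma W₀_eq_exp_logW₀ (hξ : 0 < ξ) : W₀ ξ = exp (logW₀ ξ) := by
  have h₁ := exp_sub_one_pos_of_pos hξ
  have h₂ : 0 < exp ξ + 1 := by positivity
  rw [W₀, exp_two_mul_sub_one, sqrt_eq_rpow, rpow_def_of_pos (mul_pos h₁ h₂), log_mul h₁.ne' h₂.ne',
    ← exp_add, div_eq_iff (exp_ne_zero _), ← exp_add, logW₀]
  calc (exp ξ - 1) ^ 2 = exp (log (exp ξ - 1) + log (exp ξ - 1)) := by
        rw [exp_add, exp_log h₁, sq]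
    _ = _ := by ring_nf

lemma W₀_eq_sqrt (hξ : 0 < ξ) :
    W₀ ξ = sqrt (exp ξ - 1) ^ 3 / (sqrt (exp ξ) * sqrt (exp ξ + 1)) := by
  have h₁ := exp_sub_one_pos_of_pos hξ
  have ha : 0 < sqrt (exp ξ - 1) := sqrt_pos.mpr h₁
  have hsq : exp ξ - 1 = sqrt (exp ξ - 1) ^ 2 := (sq_sqrt h₁.le).symm
  rw [W₀, exp_two_mul_sub_one, sqrt_mul h₁.le, exp_half, hsq]
  field_simp
  rw [sqrt_sq ha.le]

lemma W₀_pos (hξ : 0 < ξ) : 0 < W₀ ξ :=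
  W₀_eq_exp_logW₀ hξ ▸ exp_pos _

lemma hasDerivAt_logW₀ (hξ : 0 < ξ) : HasDerivAt logW₀ (logDerivW₀ ξ) ξ := by
  have h₁ := exp_sub_one_pos_of_pos hξ
  have h₂ : 0 < exp ξ + 1 := by positivity
  have hlog₁ := ((hasDerivAt_exp ξ).sub_const 1).log h₁.ne'
  have hlog₂ := ((hasDerivAt_exp ξ).add_const 1).log h₂.ne'
  exact ((hlog₁.const_mul (3 / 2)).sub ((hasDerivAt_id ξ).div_const 2)).sub
    (hlog₂.const_mul (1 / 2)) |>.congr_deriv (by simp [logDerivW₀])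

lemma hasDerivAt_W₀ (hξ : 0 < ξ) : HasDerivAt W₀ (logDerivW₀ ξ * W₀ ξ) ξ := by
  have hW : W₀ =ᶠ[𝓝 ξ] fun y => exp (logW₀ y) :=
    eventually_of_mem (Ioi_mem_nhds hξ) fun y hy => W₀_eq_exp_logW₀ hy
  rw [W₀_eq_exp_logW₀ hξ, mul_comm]
  exact (hasDerivAt_logW₀ hξ).exp.congr_of_eventuallyEq hW

lemma hasDerivAt_logDerivW₀ (hξ : 0 < ξ) :
    HasDerivAt logDerivW₀ (P ξ - logDerivW₀ ξ ^ 2) ξ := by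
  have h₁ := exp_sub_one_pos_of_pos hξ
  have h₂ : 0 < exp ξ + 1 := by positivity
  have hq₁ := (hasDerivAt_exp ξ).div ((hasDerivAt_exp ξ).sub_const 1) h₁.ne'
  have hq₂ := (hasDerivAt_exp ξ).div ((hasDerivAt_exp ξ).add_const 1) h₂.ne'
  refine ((hq₁.const_mul (3 / 2)).sub_const (1 / 2)).sub (hq₂.const_mul (1 / 2))
    |>.congr_deriv ?_
  have hexp₄ : exp (4 * ξ) = exp ξ ^ 4 := by rw [← exp_nat_mul]; norm_num
  have hexp₂ : exp (2 * ξ) = exp ξ ^ 2 := by rw [← exp_nat_mul]; norm_num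
  rw [P, logDerivW₀, hexp₄, hexp₂, show exp ξ ^ 2 - 1 = (exp ξ - 1) * (exp ξ + 1) by ring]
  field_simp
  ring

lemma tendsto_W₀_nhdsGT_zero : Tendsto W₀ (𝓝[>] 0) (𝓝 0) := by
  have hW : W₀ =ᶠ[𝓝[>] 0] fun ξ => sqrt (exp ξ - 1) ^ 3 / (sqrt (exp ξ) * sqrt (exp ξ + 1)) :=
    eventually_mem_nhdsWithin.mono fun ξ hξ => W₀_eq_sqrt hξ
  have hcont : ContinuousAt
      (fun ξ => sqrt (exp ξ - 1) ^ 3 / (sqrt (exp ξ) * sqrt (exp ξ + 1))) 0 := by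
    fun_prop (disch := simp)
  simpa using (hcont.tendsto.mono_left nhdsWithin_le_nhds).congr' hW.symm

end

/-- `W₀`, viewed as a function of `(x,ξ)` independent of `x`, satisfies
`W_{ξξ} + W_{xx} - P(ξ)W = 0` on `ℝ × (0,∞)`, tends to `0` as `ξ → 0⁺`,
and is positive for `ξ > 0`. -/
theorem W0_eigenfunction :
    (∀ x : ℝ, ∀ ξ > (0 : ℝ),
      deriv (deriv W₀) ξ + deriv (deriv (fun _ : ℝ => W₀ ξ)) x - P ξ * W₀ ξ = 0) ∧
    Filter.Tendsto W₀ (nhdsWithin 0 (Set.Ioi (0 : ℝ))) (nhds 0) ∧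
    ∀ ξ > (0 : ℝ), 0 < W₀ ξ := by
  refine ⟨fun x ξ hξ => ?_, tendsto_W₀_nhdsGT_zero, fun ξ hξ => W₀_pos hξ⟩
  rw [deriv_deriv_eq_of_hasDerivAt_mul_self isOpen_Ioi hξ (fun y hy => hasDerivAt_W₀ hy)
    (hasDerivAt_logDerivW₀ hξ)]
  simp
end

section
/- For ξ > 0, the Gauss curvature K(ξ) = -(1/(2P(ξ)))·(d²/dξ²)(log P(ξ)) of the metric P(ξ)(dx²+dξ²), with P(ξ) = (e^{4ξ}+10e^{2ξ}+1)/(4(e^{2ξ}-1)²), satisfies K(ξ) < 0 for all ξ > 0. -/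
/-- The Gauss curvature `K = -(1/(2P))·(log P)''` of the metric `P(ξ)(dx²+dξ²)`. -/
noncomputable def K (ξ : ℝ) : ℝ :=
  -(1 / (2 * P ξ)) * deriv (deriv (fun t => Real.log (P t))) ξ

/-!
Dividing numerator and denominator by `e^{2ξ}` gives `P = (sinh² ξ + 3) / (4 sinh² ξ)`, so
`log P = log (sinh² ξ + 3) - log (4 sinh² ξ)` away from `0`, and with `cosh² = sinh² + 1`
its second derivative is `(10 sinh² ξ + 6) / (sinh² ξ + 3)² + 2 / sinh² ξ > 0`.
-/

open Real Filter Topology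

theorem deriv_deriv_eq_of_hasDerivAt {𝕜 F : Type*} [NontriviallyNormedField 𝕜]
    [NormedAddCommGroup F] [NormedSpace 𝕜 F] {f f' : 𝕜 → F} {f'' : F} {s : Set 𝕜}
    {x : 𝕜} (hs : IsOpen s) (hf : ∀ y ∈ s, HasDerivAt f (f' y) y) (hf' : HasDerivAt f' f'' x)
    (hx : x ∈ s) : deriv (deriv f) x = f'' := by
  have hderiv : deriv f =ᶠ[𝓝 x] f' :=
    eventually_of_mem (hs.mem_nhds hx) fun y hy => (hf y hy).deriv
  rw [hderiv.deriv_eq, hf'.deriv]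

theorem P_eq_sinh (ξ : ℝ) : P ξ = (sinh ξ ^ 2 + 3) / (4 * sinh ξ ^ 2) := by
  have ha : exp ξ ≠ 0 := (exp_pos ξ).ne'
  have h2 : exp (2 * ξ) = exp ξ ^ 2 := by rw [← exp_nat_mul]; norm_num
  have h4 : exp (4 * ξ) = exp ξ ^ 4 := by rw [← exp_nat_mul]; norm_num
  rw [P, h2, h4, sinh_eq, exp_neg]
  conv_rhs => rw [← mul_div_mul_right _ _ (mul_ne_zero four_ne_zero (pow_ne_zero 2 ha))]
  congr 1 <;> field_simp <;> ring

theorem log_P_eq {ξ : ℝ} (hξ : ξ ≠ 0) :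
    log (P ξ) = log (sinh ξ ^ 2 + 3) - log (4 * sinh ξ ^ 2) := by
  have : sinh ξ ≠ 0 := sinh_eq_zero.not.mpr hξ
  rw [P_eq_sinh, log_div (by positivity) (by positivity)]

theorem hasDerivAt_log_P {ξ : ℝ} (hξ : ξ ≠ 0) :
    HasDerivAt (fun t => log (P t))
      (2 * sinh ξ * cosh ξ / (sinh ξ ^ 2 + 3) - 2 * cosh ξ / sinh ξ) ξ := by
  have hs : sinh ξ ≠ 0 := sinh_eq_zero.not.mpr hξ
  have hsq : HasDerivAt (fun t => sinh t ^ 2) (2 * sinh ξ * cosh ξ) ξ := by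
    simpa using (hasDerivAt_sinh ξ).fun_pow 2
  have hlog := ((hsq.add_const 3).log (by positivity)).sub ((hsq.const_mul 4).log (by positivity))
  refine (hlog.congr_of_eventuallyEq ?_).congr_deriv ?_
  · filter_upwards [isOpen_ne.mem_nhds hξ] with t ht using log_P_eq ht
  · field_simp

theorem hasDerivAt_deriv_log_P {ξ : ℝ} (hξ : ξ ≠ 0) :
    HasDerivAt (fun t => 2 * sinh t * cosh t / (sinh t ^ 2 + 3) - 2 * cosh t / sinh t)
      ((10 * sinh ξ ^ 2 + 6) / (sinh ξ ^ 2 + 3) ^ 2 + 2 / sinh ξ ^ 2) ξ := by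
  have hs : sinh ξ ≠ 0 := sinh_eq_zero.not.mpr hξ
  have hsinh := hasDerivAt_sinh ξ
  have hcosh := hasDerivAt_cosh ξ
  have hsq : HasDerivAt (fun t => sinh t ^ 2 + 3) (2 * sinh ξ * cosh ξ) ξ := by
    simpa using ((hasDerivAt_sinh ξ).fun_pow 2).add_const 3
  refine ((((hsinh.const_mul 2).fun_mul hcosh).fun_div hsq (by positivity)).sub
    ((hcosh.const_mul 2).fun_div hsinh hs)).congr_deriv ?_
  field_simp
  linear_combination 18 * (sinh ξ ^ 2 + 1) * cosh_sq ξ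

theorem deriv_deriv_log_P_pos {ξ : ℝ} (hξ : ξ ≠ 0) :
    0 < deriv (deriv fun t => log (P t)) ξ := by
  have hs : sinh ξ ≠ 0 := sinh_eq_zero.not.mpr hξ
  rw [deriv_deriv_eq_of_hasDerivAt isOpen_ne (fun _ => hasDerivAt_log_P)
    (hasDerivAt_deriv_log_P hξ) hξ]
  positivity

/-- The Gauss curvature is negative: `K(ξ) < 0` for all `ξ > 0`. -/
theorem gauss_curvature_negative (ξ : ℝ) (hξ : 0 < ξ) : K ξ < 0 := by
  have hP : 0 < P ξ := by
    rw [P_eq_sinh]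
    have : 0 < sinh ξ := sinh_pos_iff.mpr hξ
    positivity
  have hconvex := deriv_deriv_log_P_pos hξ.ne'
  rw [K, neg_mul, neg_neg_iff_pos]
  positivity
end
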